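/- (Edge-weighted Fortuin–Kasteleyn representation) Let G be a finite simple graph with vertex set V and edge set E, equipped with a real interaction energy J_e for each edge e ∈ E, and let q be a positive integer and β a real number. Then ∑_{σ : V → Fin q} ∏_{e = {i,j} ∈ E} exp(βJ_e·[σ i = σ j]) = ∑_{A ⊆ E} q^{k(A)} · ∏_{e ∈ A} (exp(βJ_e) − 1), where [σ i = σ j] is 1 if σ i = σ j and 0 otherwise, and k(A) is the number of connected components of the spanning subgraph (V, A). -/

import Mathlib

/-!
Writing each Boltzmann factor as `exp(βJ_e·[σ i = σ j]) = 1 + (exp(βJ_e) − 1)·[σ i = σ j]` and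
multiplying out turns the partition function into a sum over edge sets `A ⊆ E` of
`∏_{e ∈ A} (exp(βJ_e) − 1)` times the number of colourings that are constant along every edge
of `A`. Those colourings are exactly the functions on the connected components of `(V, A)`,
so there are `q^{k(A)}` of them.
-/

open Finset

/-- Number of connected components of the spanning subgraph `(V, A)`. -/
noncomputable def numComp {V : Type*} [Fintype V] (A : Finset (Sym2 V)) : ℕ :=
  Nat.card (SimpleGraph.fromEdgeSet (A : Set (Sym2 V))).ConnectedComponent

namespace SimpleGraph

variable {V α : Type*} {H : SimpleGraph V}

theorem Walk.apply_eq_of_forall_adj {f : V → α} (hf : ∀ ⦃v w⦄, H.Adj v w → f v = f w)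
    {v w : V} (p : H.Walk v w) : f v = f w := by
  induction p with
  | nil => rfl
  | cons hadj _ ih => exact (hf hadj).trans ih

variable (H α) in
def ConnectedComponent.liftEquiv :
    {f : V → α // ∀ ⦃v w⦄, H.Adj v w → f v = f w} ≃ (H.ConnectedComponent → α) where
  toFun f := ConnectedComponent.lift f.1 fun _ _ p _ => p.apply_eq_of_forall_adj f.2
  invFun g := ⟨g ∘ H.connectedComponentMk, fun _ _ hadj =>
    congrArg g (connectedComponentMk_eq_of_adj hadj)⟩
  left_inv _ := rfl
  right_inv _ := funext fun c => c.ind fun _ => rfl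

theorem card_forall_adj_apply_eq [Finite V] :
    Nat.card {f : V → α // ∀ ⦃v w⦄, H.Adj v w → f v = f w} =
      Nat.card α ^ Nat.card H.ConnectedComponent := by
  rw [Nat.card_congr (ConnectedComponent.liftEquiv α H), Nat.card_fun]

theorem forall_isDiag_map_iff_fromEdgeSet_adj {s : Set (Sym2 V)} (f : V → α) :
    (∀ e ∈ s, (e.map f).IsDiag) ↔ ∀ ⦃v w⦄, (fromEdgeSet s).Adj v w → f v = f w := by
  refine ⟨fun h v w hadj => Sym2.mk_isDiag_iff.mp (h _ ((fromEdgeSet_adj s).mp hadj).1),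
    fun h e he => ?_⟩
  induction e using Sym2.ind with
  | _ v w =>
    rw [Sym2.map_mk, Sym2.mk_isDiag_iff]
    by_cases hvw : v = w
    · rw [hvw]
    · exact h ((fromEdgeSet_adj s).mpr ⟨he, hvw⟩)

end SimpleGraph

open SimpleGraph

theorem card_filter_forall_isDiag_map {V : Type*} [Fintype V] [DecidableEq V] (q : ℕ)
    (A : Finset (Sym2 V)) : #{σ : V → Fin q | ∀ e ∈ A, (e.map σ).IsDiag} = q ^ numComp A := by
  rw [← Fintype.card_subtype, ← Nat.card_eq_fintype_card]
  simp_rw [← mem_coe (s := A), forall_isDiag_map_iff_fromEdgeSet_adj]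
  rw [card_forall_adj_apply_eq, Nat.card_eq_fintype_card, Fintype.card_fin, numComp]

theorem sum_prod_ite_isDiag_map {V R : Type*} [Fintype V] [DecidableEq V] [CommSemiring R]
    (q : ℕ) (A : Finset (Sym2 V)) :
    ∑ σ : V → Fin q, ∏ e ∈ A, (if (e.map σ).IsDiag then 1 else 0 : R) = (q : R) ^ numComp A := by
  rw [← Nat.cast_pow, ← card_filter_forall_isDiag_map, natCast_card_filter]
  simp only [prod_boole]
  -- the two sides differ only in their `Decidable` instances
  congr!

theorem sum_prod_one_add_mul {ι κ R : Type*} [Fintype κ] [CommSemiring R] (s : Finset ι)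
    (w : ι → R) (x : κ → ι → R) :
    ∑ k, ∏ i ∈ s, (1 + w i * x k i) = ∑ t ∈ s.powerset, (∏ i ∈ t, w i) * ∑ k, ∏ i ∈ t, x k i := by
  simp only [prod_one_add, prod_mul_distrib, mul_sum]
  exact sum_comm

theorem exp_mul_ite_one_zero (x : ℝ) (p : Prop) [Decidable p] :
    Real.exp (x * if p then 1 else 0) = 1 + (Real.exp x - 1) * if p then 1 else 0 := by
  split_ifs <;> simp

theorem edge_weighted_fortuin_kasteleyn_general {V : Type*} [Fintype V] [DecidableEq V]
    (G : SimpleGraph V) [DecidableRel G.Adj] (J : Sym2 V → ℝ)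
    (q : ℕ) (β : ℝ) :
    (∑ σ : V → Fin q, ∏ e ∈ G.edgeFinset,
        Real.exp (β * J e * (if (e.map σ).IsDiag then 1 else 0))) =
      ∑ A ∈ G.edgeFinset.powerset,
        (q : ℝ) ^ (numComp A) * ∏ e ∈ A, (Real.exp (β * J e) - 1) := by
  simp_rw [exp_mul_ite_one_zero]
  rw [sum_prod_one_add_mul]
  refine sum_congr rfl fun A _ => ?_
  rw [sum_prod_ite_isDiag_map, mul_comm]

/-- **edge-weighted Fortuin–Kasteleyn representation.** With a real
interaction energy `J e` on each edge `e`,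
`∑_{σ : V → Fin q} ∏_{e = {i,j} ∈ E} exp(βJ_e·[σ i = σ j])
  = ∑_{A ⊆ E} q^{k(A)} · ∏_{e ∈ A} (exp(βJ_e) − 1)`. -/
theorem edge_weighted_fortuin_kasteleyn {V : Type*} [Fintype V] [DecidableEq V]
    (G : SimpleGraph V) [DecidableRel G.Adj] (J : Sym2 V → ℝ)
    (q : ℕ) (hq : 0 < q) (β : ℝ) :
    (∑ σ : V → Fin q, ∏ e ∈ G.edgeFinset,
        Real.exp (β * J e * (if (e.map σ).IsDiag then 1 else 0))) =
      ∑ A ∈ G.edgeFinset.powerset,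
        (q : ℝ) ^ (numComp A) * ∏ e ∈ A, (Real.exp (β * J e) - 1) :=
  edge_weighted_fortuin_kasteleyn_general G J q β
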